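/- For every integer k ≥ 2, every q ∈ [0,1) (with p = 1 − q and the convention 0·ln 0 = 0), and every real r > 2^k·ln 2 / ( q·ln q − (2^k − q)·ln((2^k − 1)/(2^k − q)) ), the probability that F_k(n,⌊rn⌋) is p-satisfiable tends to 0 as n → ∞; in fact this probability is at most e^{−cn} for some constant c = c(k,p,r) > 0 and all sufficiently large n. -/

import Mathlib

open Finset Filter Real

noncomputable section

abbrev Formula (n k m : ℕ) := Fin m → Fin k → Fin n × Bool

def clauseSat {n k : ℕ} (σ : Fin n → Bool) (c : Fin k → Fin n × Bool) : Prop :=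
  ∃ j : Fin k, σ (c j).1 = (c j).2

instance {n k : ℕ} (σ : Fin n → Bool) (c : Fin k → Fin n × Bool) :
    Decidable (clauseSat σ c) := by unfold clauseSat; infer_instance

def numSat {n k m : ℕ} (σ : Fin n → Bool) (F : Formula n k m) : ℕ :=
  (Finset.univ.filter fun i => clauseSat σ (F i)).card

def pSatisfiable (n k m : ℕ) (p : ℝ) (F : Formula n k m) : Prop :=
  ∃ σ : Fin n → Bool,
    (1 - (2:ℝ)^(-(k:ℤ)) + p * (2:ℝ)^(-(k:ℤ))) * m ≤ (numSat σ F : ℝ)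

open Classical in
def prob {β : Type*} [Fintype β] (P : β → Prop) : ℝ :=
  ((Finset.univ.filter P).card : ℝ) / (Fintype.card β)

lemma cardBad (n : ℕ) (σ : Fin n → Bool) :
    (univ.filter fun l : Fin n × Bool => ¬ σ l.1 = l.2).card = n := by
  have h : (univ.filter fun l : Fin n × Bool => ¬ σ l.1 = l.2)
      = univ.image fun i : Fin n => (i, !σ i) := by
    ext ⟨i, s⟩
    simp only [mem_filter, mem_univ, true_and, mem_image, Prod.ext_iff]
    constructor
    · intro h; exact ⟨i, rfl, by cases s <;> cases hsi : σ i <;> simp_all⟩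
    · rintro ⟨j, rfl, rfl⟩; simp
  rw [h, card_image_of_injective _ (fun a b hab => congrArg Prod.fst hab)]
  simp

lemma cardUnsat (n k : ℕ) (σ : Fin n → Bool) :
    (univ.filter fun c : Fin k → Fin n × Bool => ¬ clauseSat σ c).card = n ^ k := by
  have h : (univ.filter fun c : Fin k → Fin n × Bool => ¬ clauseSat σ c)
      = Fintype.piFinset fun _ : Fin k =>
          (univ.filter fun l : Fin n × Bool => ¬ σ l.1 = l.2) := by
    ext c
    simp [clauseSat, Fintype.mem_piFinset]
  rw [h, Fintype.card_piFinset]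
  simp [cardBad]

lemma cardTotal (n k : ℕ) (σ : Fin n → Bool) :
    (univ.filter fun c : Fin k → Fin n × Bool => clauseSat σ c).card + n ^ k
      = (2 * n) ^ k := by
  have := Finset.card_filter_add_card_filter_not
    (s := (univ : Finset (Fin k → Fin n × Bool))) (p := fun c => clauseSat σ c)
  rw [cardUnsat] at this
  rw [this]
  simp [Fintype.card_fun, Fintype.card_prod, mul_pow, mul_comm]

lemma key_count (n k m : ℕ) (σ : Fin n → Bool) (lam : ℝ) (hlam : 1 ≤ lam) (t : ℕ) :
    ((univ.filter fun F : Formula n k m => t ≤ numSat σ F).card : ℝ) * lam ^ t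
      ≤ (lam * (((2 * n) ^ k : ℕ) - ((n ^ k : ℕ) : ℝ)) + ((n ^ k : ℕ) : ℝ)) ^ m := by
  have hlam0 : (0:ℝ) < lam := lt_of_lt_of_le one_pos hlam
  set f : (Fin k → Fin n × Bool) → ℝ := fun c => if clauseSat σ c then lam else 1 with hf
  have hsum : ∀ F : Formula n k m, lam ^ (numSat σ F) = ∏ i, f (F i) := by
    intro F
    rw [numSat, Finset.card_filter, ← Finset.prod_pow_eq_pow_sum]
    refine Finset.prod_congr rfl fun i _ => ?_
    by_cases h : clauseSat σ (F i) <;> simp [hf, h]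
  have hS : ∑ c : Fin k → Fin n × Bool, f c
      = lam * (((2 * n) ^ k : ℕ) - ((n ^ k : ℕ) : ℝ)) + ((n ^ k : ℕ) : ℝ) := by
    rw [Finset.sum_ite, Finset.sum_const, Finset.sum_const]
    have h1 := cardTotal n k σ
    have h2 : ((univ.filter fun c : Fin k → Fin n × Bool => clauseSat σ c).card : ℝ)
        = ((2 * n) ^ k : ℕ) - ((n ^ k : ℕ) : ℝ) := by
      have := congrArg (fun x : ℕ => (x : ℝ)) h1
      push_cast at this ⊢
      linarith
    simp only [nsmul_eq_mul, mul_one]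
    rw [h2, cardUnsat n k σ]
    ring
  calc ((univ.filter fun F : Formula n k m => t ≤ numSat σ F).card : ℝ) * lam ^ t
      = ∑ _F ∈ (univ.filter fun F : Formula n k m => t ≤ numSat σ F), lam ^ t := by
        rw [Finset.sum_const, nsmul_eq_mul]
    _ ≤ ∑ F ∈ (univ.filter fun F : Formula n k m => t ≤ numSat σ F), lam ^ (numSat σ F) := by
        refine Finset.sum_le_sum fun F hF => ?_
        exact pow_le_pow_right₀ hlam (Finset.mem_filter.mp hF).2
    _ ≤ ∑ F : Formula n k m, lam ^ (numSat σ F) := by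
        refine Finset.sum_le_sum_of_subset_of_nonneg (Finset.filter_subset _ _)
          fun F _ _ => by positivity
    _ = ∑ F : Formula n k m, ∏ i, f (F i) := by
        exact Finset.sum_congr rfl fun F _ => hsum F
    _ = ∏ _i : Fin m, ∑ c : Fin k → Fin n × Bool, f c := by
        rw [Finset.prod_univ_sum]
        rw [Fintype.piFinset_univ]
    _ = _ := by rw [hS, Finset.prod_const, Finset.card_univ, Fintype.card_fin]

lemma D_pos (T q : ℝ) (hT : 1 < T) (hq0 : 0 ≤ q) (hq1 : q < 1) :
    0 < q * Real.log q - (T - q) * Real.log ((T - 1)/(T - q)) := by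
  have hTq : 0 < T - q := by linarith
  have hT1 : 0 < T - 1 := by linarith
  have h2 : (T - q) * Real.log ((T - 1)/(T - q)) < q - 1 := by
    have hx : (0:ℝ) < (T - 1)/(T - q) := div_pos hT1 hTq
    have hne : (T - 1)/(T - q) ≠ 1 := by
      intro h
      have := (div_eq_one_iff_eq (ne_of_gt hTq)).mp h
      linarith
    have hlog := Real.log_lt_sub_one_of_pos hx hne
    have h3 := (mul_lt_mul_iff_right₀ hTq).mpr hlog
    have h4 : (T - q) * ((T - 1)/(T - q) - 1) = q - 1 := by field_simp; ring
    linarith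
  have h1 : q - 1 ≤ q * Real.log q := by
    rcases eq_or_lt_of_le hq0 with h | h
    · simp [← h]
    · have hinv := Real.log_le_sub_one_of_pos (inv_pos.mpr h)
      rw [Real.log_inv] at hinv
      have h5 := (mul_le_mul_iff_right₀ h).mpr hinv
      rw [mul_neg] at h5
      have h6 : q * (q⁻¹ - 1) = 1 - q := by field_simp
      linarith
  linarith

lemma exists_lam (T q r : ℝ) (hT : 1 < T) (hq0 : 0 ≤ q) (hq1 : q < 1) (hr0 : 0 < r)
    (hrD : T * Real.log 2 <
      r * (q * Real.log q - (T - q) * Real.log ((T - 1)/(T - q)))) :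
    ∃ lam : ℝ, 1 ≤ lam ∧
      Real.log 2 / r <
        (1 - q * T⁻¹) * Real.log lam - Real.log (lam * (1 - T⁻¹) + T⁻¹) := by
  have hT0 : (0:ℝ) < T := by linarith
  have hTq : 0 < T - q := by linarith
  have hT1 : 0 < T - 1 := by linarith
  rcases eq_or_lt_of_le hq0 with hq | hq
  · -- q = 0
    subst hq
    simp only [zero_mul, mul_zero, sub_zero, zero_sub, Real.log_zero] at *
    set a : ℝ := 1 - T⁻¹ with ha_def
    set b : ℝ := T⁻¹ with hb_def
    have ha0 : 0 < a := by
      have : T⁻¹ < 1 := by rw [inv_lt_one_iff₀]; right; exact hT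
      simp [ha_def]; linarith
    have hb0 : 0 < b := inv_pos.mpr hT0
    have ha_eq : a = (T - 1)/T := by rw [ha_def, hb_def]; field_simp
    set s : ℝ := Real.exp (-(Real.log 2 / r)) with hs_def
    have hlogs : Real.log s = -(Real.log 2 / r) := Real.log_exp _
    have hloga : Real.log a < Real.log s := by
      rw [hlogs, ha_eq, lt_neg, div_lt_iff₀ hr0]
      nlinarith
    have has : a < s := by
      calc a = Real.exp (Real.log a) := (Real.exp_log ha0).symm
        _ < Real.exp (Real.log s) := Real.exp_lt_exp.mpr hloga
        _ = s := Real.exp_log (by rw [hs_def]; positivity)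
    have hsa : 0 < s - a := by linarith
    refine ⟨max 1 (2 * b / (s - a)), le_max_left _ _, ?_⟩
    set lam : ℝ := max 1 (2 * b / (s - a)) with hlam_def
    have hlam1 : 1 ≤ lam := le_max_left _ _
    have hlam0 : 0 < lam := lt_of_lt_of_le one_pos hlam1
    have hge : 2 * b / (s - a) ≤ lam := le_max_right _ _
    have hblam : b / lam ≤ (s - a)/2 := by
      rw [div_le_iff₀ hlam0]
      have h2b : 2 * b ≤ lam * (s - a) := (div_le_iff₀ hsa).mp hge
      nlinarith
    have hx0 : 0 < a + b / lam := by positivity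
    have hsplit : lam * a + b = lam * (a + b / lam) := by field_simp
    rw [hsplit, Real.log_mul (ne_of_gt hlam0) (ne_of_gt hx0), one_mul]
    have hxs : a + b / lam < s := by linarith
    have : Real.log (a + b / lam) < Real.log s := Real.log_lt_log hx0 hxs
    rw [hlogs] at this
    linarith
  · -- q > 0
    refine ⟨(T - q)/(q * (T - 1)), ?_, ?_⟩
    · rw [le_div_iff₀ (by positivity)]
      nlinarith
    · set lam : ℝ := (T - q)/(q * (T - 1)) with hlam_def
      have hg : lam * (1 - T⁻¹) + T⁻¹ = q⁻¹ := by
        rw [hlam_def]; field_simp; ring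
      have hloglam : Real.log lam = Real.log (T - q) - (Real.log q + Real.log (T - 1)) := by
        rw [hlam_def, Real.log_div (ne_of_gt hTq) (by positivity),
          Real.log_mul (ne_of_gt hq) (ne_of_gt hT1)]
      have hlogdiv : Real.log ((T - 1)/(T - q)) = Real.log (T - 1) - Real.log (T - q) :=
        Real.log_div (ne_of_gt hT1) (ne_of_gt hTq)
      rw [hg, hloglam, Real.log_inv]
      have hED : (1 - q * T⁻¹) * (Real.log (T - q) - (Real.log q + Real.log (T - 1)))
          - -Real.log q
          = (q * Real.log q - (T - q) * (Real.log (T - 1) - Real.log (T - q)))/T := by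
        field_simp
        ring
      rw [hED]
      rw [div_lt_div_iff₀ hr0 hT0]
      rw [hlogdiv] at hrD
      linarith

lemma prob_bound (n k m : ℕ) (hn : 1 ≤ n) (hk : 1 ≤ k) (q : ℝ) (lam : ℝ) (hlam : 1 ≤ lam) :
    prob (pSatisfiable n k m (1 - q))
      ≤ 2 ^ n * (lam * (1 - ((2:ℝ)^k)⁻¹) + ((2:ℝ)^k)⁻¹) ^ m
        / lam ^ (⌈(1 - q * ((2:ℝ)^k)⁻¹) * m⌉₊) := by
  classical
  have hlam0 : (0:ℝ) < lam := lt_of_lt_of_le one_pos hlam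
  set θ : ℝ := 1 - q * ((2:ℝ)^k)⁻¹ with hθ_def
  set t : ℕ := ⌈θ * m⌉₊ with ht_def
  set g : ℝ := lam * (1 - ((2:ℝ)^k)⁻¹) + ((2:ℝ)^k)⁻¹ with hg_def
  -- the union bound on cardinalities
  have hb : (2:ℝ)^(-(k:ℤ)) = ((2:ℝ)^k)⁻¹ := by
    rw [zpow_neg, zpow_natCast]
  have hNf : ((univ.filter fun F : Formula n k m => pSatisfiable n k m (1 - q) F).card : ℝ)
      ≤ ∑ σ : Fin n → Bool,
          ((univ.filter fun F : Formula n k m => t ≤ numSat σ F).card : ℝ) := by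
    have hsub : (univ.filter fun F : Formula n k m => pSatisfiable n k m (1 - q) F)
        ⊆ univ.biUnion fun σ : Fin n → Bool =>
            univ.filter fun F : Formula n k m => t ≤ numSat σ F := by
      intro F hF
      obtain ⟨σ, hσ⟩ := (Finset.mem_filter.mp hF).2
      refine Finset.mem_biUnion.mpr ⟨σ, Finset.mem_univ _, Finset.mem_filter.mpr
        ⟨Finset.mem_univ _, ?_⟩⟩
      rw [ht_def]
      rw [Nat.ceil_le]
      calc θ * m = (1 - (2:ℝ)^(-(k:ℤ)) + (1 - q) * (2:ℝ)^(-(k:ℤ))) * m := by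
            rw [hθ_def, hb]; ring
        _ ≤ _ := hσ
    calc ((univ.filter fun F : Formula n k m => pSatisfiable n k m (1 - q) F).card : ℝ)
        ≤ ((univ.biUnion fun σ : Fin n → Bool =>
            univ.filter fun F : Formula n k m => t ≤ numSat σ F).card : ℝ) := by
          exact_mod_cast Nat.cast_le.mpr (Finset.card_le_card hsub)
      _ ≤ _ := by exact_mod_cast Finset.card_biUnion_le
  -- key count for each σ
  have hA : ∀ σ : Fin n → Bool,
      ((univ.filter fun F : Formula n k m => t ≤ numSat σ F).card : ℝ)
        ≤ (lam * (((2 * n) ^ k : ℕ) - ((n ^ k : ℕ) : ℝ)) + ((n ^ k : ℕ) : ℝ)) ^ m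
            / lam ^ t := by
    intro σ
    rw [le_div_iff₀ (by positivity)]
    exact key_count n k m σ lam hlam t
  -- per-clause normalization
  have h2k : (0:ℝ) < (2:ℝ)^k := by positivity
  have hnk : (0:ℝ) < (n:ℝ)^k := by positivity
  have hgA : (lam * (((2 * n) ^ k : ℕ) - ((n ^ k : ℕ) : ℝ)) + ((n ^ k : ℕ) : ℝ))
      = ((2 * n : ℕ) ^ k : ℝ) * g := by
    push_cast
    rw [hg_def, mul_pow]
    have hinv : (2:ℝ)^k * ((2:ℝ)^k)⁻¹ = 1 := mul_inv_cancel₀ (ne_of_gt h2k)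
    linear_combination (lam - 1) * (n:ℝ)^k * hinv
  have hTot : (Fintype.card (Formula n k m) : ℝ) = (((2 * n : ℕ) ^ k : ℝ)) ^ m := by
    simp [Formula, Fintype.card_fun, Fintype.card_prod]
    push_cast
    ring_nf
  have hTot0 : (0:ℝ) < ((2 * n : ℕ) ^ k : ℝ) ^ m := by
    have : (0:ℕ) < 2 * n := by omega
    positivity
  rw [prob, Finset.filter_congr_decidable]
  rw [div_le_div_iff₀ (by rw [hTot]; exact hTot0) (by positivity)]
  have hg0 : 0 < g := by
    rw [hg_def]
    have h1 : ((2:ℝ)^k)⁻¹ ≤ 1 := by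
      rw [inv_le_one_iff₀]; right; exact one_le_pow₀ one_le_two
    nlinarith
  calc ((univ.filter fun F : Formula n k m => pSatisfiable n k m (1 - q) F).card : ℝ)
        * lam ^ t
      ≤ (∑ σ : Fin n → Bool,
          ((univ.filter fun F : Formula n k m => t ≤ numSat σ F).card : ℝ)) * lam ^ t := by
        exact mul_le_mul_of_nonneg_right hNf (by positivity)
    _ ≤ (∑ _σ : Fin n → Bool,
          (lam * (((2 * n) ^ k : ℕ) - ((n ^ k : ℕ) : ℝ)) + ((n ^ k : ℕ) : ℝ)) ^ m
            / lam ^ t) * lam ^ t := by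
        refine mul_le_mul_of_nonneg_right (Finset.sum_le_sum fun σ _ => hA σ) (by positivity)
    _ = 2 ^ n * ((((2 * n : ℕ) ^ k : ℝ)) * g) ^ m := by
        rw [Finset.sum_const, Finset.card_univ, nsmul_eq_mul, hgA]
        have hcard : (Fintype.card (Fin n → Bool) : ℝ) = 2 ^ n := by
          simp
        rw [hcard, mul_assoc, div_mul_cancel₀ _ (ne_of_gt (pow_pos hlam0 t))]
    _ = 2 ^ n * g ^ m * (Fintype.card (Formula n k m) : ℝ) := by
        rw [hTot, mul_pow]
        ring

/-- Upper bound (Lemma 2 in the paper): for `k ≥ 2`, `q ∈ [0,1)`, `p = 1 - q`, and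
any `r` exceeding `2^k ln 2 / (q ln q - (2^k - q) ln((2^k-1)/(2^k-q)))`
(`0 · ln 0 = 0` being automatic since `Real.log 0 = 0`), the probability that
`F_k(n,⌊rn⌋)` is `p`-satisfiable tends to `0`; in fact it is at most `e^{-cn}` for
some `c > 0` and all sufficiently large `n`. -/
theorem maxsat_upper_bound (k : ℕ) (hk : 2 ≤ k) (q : ℝ) (hq0 : 0 ≤ q) (hq1 : q < 1)
    (r : ℝ)
    (hr : (2:ℝ)^k * Real.log 2 /
        (q * Real.log q - ((2:ℝ)^k - q) * Real.log (((2:ℝ)^k - 1)/((2:ℝ)^k - q))) < r) :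
    Tendsto (fun n : ℕ => prob (pSatisfiable n k ⌊r * n⌋₊ (1 - q))) atTop (nhds 0) ∧
    ∃ c : ℝ, 0 < c ∧ ∀ᶠ n : ℕ in atTop,
      prob (pSatisfiable n k ⌊r * n⌋₊ (1 - q)) ≤ Real.exp (-(c * n)) := by
  have hT1 : (1:ℝ) < (2:ℝ)^k := one_lt_pow₀ one_lt_two (by omega)
  set T : ℝ := (2:ℝ)^k with hT_def
  clear_value T
  have hT0 : (0:ℝ) < T := lt_trans one_pos hT1
  have hD := D_pos T q hT1 hq0 hq1
  have hlog2 : 0 < Real.log 2 := Real.log_pos one_lt_two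
  have hr0 : 0 < r := lt_trans (div_pos (mul_pos hT0 hlog2) hD) hr
  have hrD : T * Real.log 2 <
      r * (q * Real.log q - (T - q) * Real.log ((T - 1)/(T - q))) := by
    rw [div_lt_iff₀ hD] at hr
    linarith
  obtain ⟨lam, hlam, hE⟩ := exists_lam T q r hT1 hq0 hq1 hr0 hrD
  have hlam0 : (0:ℝ) < lam := lt_of_lt_of_le one_pos hlam
  set E : ℝ := (1 - q * T⁻¹) * Real.log lam - Real.log (lam * (1 - T⁻¹) + T⁻¹) with hE_def
  clear_value E
  have hE0 : 0 < E := lt_trans (div_pos hlog2 hr0) hE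
  set c : ℝ := (r * E - Real.log 2)/2 with hc_def
  clear_value c
  have hc : 0 < c := by
    have h1 : Real.log 2 < E * r := (div_lt_iff₀ hr0).mp hE
    rw [mul_comm] at h1
    rw [hc_def]
    linarith only [h1]
  have hbound : ∀ᶠ n : ℕ in atTop,
      prob (pSatisfiable n k ⌊r * n⌋₊ (1 - q)) ≤ Real.exp (-(c * n)) := by
    filter_upwards [eventually_ge_atTop (max 1 ⌈E/c⌉₊)] with n hn
    have hn1 : 1 ≤ n := le_trans (le_max_left _ _) hn
    have hnE : E ≤ c * n := by
      have h1 : (⌈E/c⌉₊ : ℝ) ≤ (n : ℝ) := by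
        exact_mod_cast le_trans (le_max_right _ _) hn
      have h2 : E/c ≤ (n : ℝ) := le_trans (Nat.le_ceil _) h1
      have := (div_le_iff₀ hc).mp h2
      linarith
    set m : ℕ := ⌊r * (n:ℕ)⌋₊ with hm_def
    clear_value m
    set g : ℝ := lam * (1 - T⁻¹) + T⁻¹ with hg_def
    clear_value g
    set t : ℕ := ⌈(1 - q * T⁻¹) * (m:ℝ)⌉₊ with ht_def
    clear_value t
    have hg0 : 0 < g := by
      have h1 : T⁻¹ ≤ 1 := by
        rw [inv_le_one_iff₀]; right; exact le_of_lt hT1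
      have h2 : 0 < T⁻¹ := inv_pos.mpr hT0
      rw [hg_def]; nlinarith
    have hstep := prob_bound n k m hn1 (by omega) q lam hlam
    rw [← hT_def] at hstep
    rw [← hg_def, ← ht_def] at hstep
    have hrhs : (2:ℝ) ^ n * g ^ m / lam ^ t
        = Real.exp ((n:ℝ) * Real.log 2 + (m:ℝ) * Real.log g - (t:ℝ) * Real.log lam) := by
      rw [Real.exp_sub, Real.exp_add, Real.exp_nat_mul, Real.exp_nat_mul, Real.exp_nat_mul,
        Real.exp_log two_pos, Real.exp_log hg0, Real.exp_log hlam0]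
    have hexp : (n:ℝ) * Real.log 2 + (m:ℝ) * Real.log g - (t:ℝ) * Real.log lam
        ≤ -(c * n) := by
      have f1 : (1 - q * T⁻¹) * (m:ℝ) ≤ (t:ℝ) := by rw [ht_def]; exact Nat.le_ceil _
      have f2 : 0 ≤ Real.log lam := Real.log_nonneg hlam
      have f3 : r * (n:ℝ) - 1 ≤ (m:ℝ) := by
        have := Nat.lt_floor_add_one (r * (n:ℝ))
        rw [hm_def]
        push_cast
        linarith
      have f12 := mul_le_mul_of_nonneg_right f1 f2
      have f9 : (m:ℝ) * E = (m:ℝ) * ((1 - q * T⁻¹) * Real.log lam) - (m:ℝ) * Real.log g := by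
        rw [hE_def, hg_def]; ring
      have f10 : (r * (n:ℝ) - 1) * E ≤ (m:ℝ) * E := mul_le_mul_of_nonneg_right f3 hE0.le
      have f8 : (n:ℝ) * (r * E) = (n:ℝ) * (2 * c + Real.log 2) := by
        rw [hc_def]; ring
      linarith only [f12, f9, f10, f8, hnE]
    calc prob (pSatisfiable n k m (1 - q)) ≤ (2:ℝ) ^ n * g ^ m / lam ^ t := hstep
      _ = Real.exp ((n:ℝ) * Real.log 2 + (m:ℝ) * Real.log g - (t:ℝ) * Real.log lam) := hrhs
      _ ≤ Real.exp (-(c * n)) := Real.exp_le_exp.mpr hexp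
  refine ⟨?_, c, hc, hbound⟩
  have h0 : ∀ n : ℕ, 0 ≤ prob (pSatisfiable n k ⌊r * n⌋₊ (1 - q)) := by
    intro n
    unfold prob
    exact div_nonneg (Nat.cast_nonneg _) (Nat.cast_nonneg _)
  refine squeeze_zero' (Eventually.of_forall h0) hbound ?_
  have h1 : Tendsto (fun n : ℕ => c * (n:ℝ)) atTop atTop :=
    Tendsto.const_mul_atTop hc tendsto_natCast_atTop_atTop
  have h2 : Tendsto (fun n : ℕ => -(c * (n:ℝ))) atTop atBot := tendsto_neg_atTop_atBot.comp h1
  exact Real.tendsto_exp_atBot.comp h2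

end
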